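/- Let L be a linearly ordered MV-algebra, let C ⊆ L be a convex set, and let a ∈ L. Then the set {z → a | z ∈ C} is convex. -/

import Mathlib

/-- An MV-algebra: a commutative monoid `(L, ⊕, 0)` with a unary `¬` satisfying
`¬¬x = x`, `x ⊕ ¬0 = ¬0` and `¬(¬x ⊕ y) ⊕ y = ¬(¬y ⊕ x) ⊕ x`. -/
class MV (L : Type*) where
  add : L → L → L
  zero : L
  neg : L → L
  add_assoc : ∀ x y z : L, add (add x y) z = add x (add y z)
  add_comm : ∀ x y : L, add x y = add y x
  add_zero : ∀ x : L, add x zero = x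
  neg_neg : ∀ x : L, neg (neg x) = x
  add_neg_zero : ∀ x : L, add x (neg zero) = neg zero
  luk : ∀ x y : L, add (neg (add (neg x) y)) y = add (neg (add (neg y) x)) x

namespace MV

variable {L : Type*} [MV L]

/-- `1 = ¬0`. -/
def one : L := neg zero

/-- `x → y = ¬x ⊕ y`. -/
def imp (x y : L) : L := add (neg x) y

/-- `x ⊗ y = ¬(¬x ⊕ ¬y)`. -/
def otimes (x y : L) : L := neg (add (neg x) (neg y))

/-- `x ∨ y = (x → y) → y`. -/
def join (x y : L) : L := imp (imp x y) y

/-- `x ∧ y = ¬(¬x ∨ ¬y)`. -/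
def meet (x y : L) : L := neg (join (neg x) (neg y))

/-- `x ≤ y` iff `x → y = 1`. -/
def le (x y : L) : Prop := imp x y = one

/-- `x < y` iff `x ≤ y` and `x ≠ y`. -/
def lt (x y : L) : Prop := le x y ∧ x ≠ y

/-- A lattice filter: nonempty, upward closed, closed under `∧`. -/
def IsLatticeFilter (F : Set L) : Prop :=
  F.Nonempty ∧ (∀ x y : L, x ∈ F → le x y → y ∈ F) ∧
    (∀ x y : L, x ∈ F → y ∈ F → meet x y ∈ F)

/-- A prime lattice filter: a proper lattice filter such that
`x ∨ y ∈ F` implies `x ∈ F` or `y ∈ F`. -/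
def IsPrimeFilter (F : Set L) : Prop :=
  IsLatticeFilter F ∧ F ≠ Set.univ ∧ ∀ x y : L, join x y ∈ F → x ∈ F ∨ y ∈ F

/-- `F ⊸ G = {z | ∀ a ∉ G, z → a ∉ F}` (intended for `F ⊆ G`). -/
def lolli (F G : Set L) : Set L := {z | ∀ a ∉ G, imp z a ∉ F}

/-- The general `F ⊸ G = (F ∩ G) ⊸ G`. -/
def lolli' (F G : Set L) : Set L := lolli (F ∩ G) G

/-- The kernel `K(F) = {z | ∀ a ∉ F, z → a ∉ F}`. -/
def ker (F : Set L) : Set L := {z | ∀ a ∉ F, imp z a ∉ F}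

/-- `F⁺ = {z | ¬z ∉ F}`. -/
def plus (F : Set L) : Set L := {z | neg z ∉ F}

/-- An implication filter: contains `1` and is closed under modus ponens. -/
def IsImplicationFilter (P : Set L) : Prop :=
  (one : L) ∈ P ∧ ∀ x y : L, x ∈ P → imp x y ∈ P → y ∈ P

/-- `x ~_P y` iff `x → y ∈ P` and `y → x ∈ P`. -/
def simP (P : Set L) (x y : L) : Prop := imp x y ∈ P ∧ imp y x ∈ P

/-- `J_u(F, P) = {z | ∃ f ∈ F, z ~_P f}`. -/
def Ju (F P : Set L) : Set L := {z | ∃ f ∈ F, simP P z f}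

/-- `J_d(F, P) = (J_u(F⁺, P))⁺`. -/
def Jd (F P : Set L) : Set L := plus (Ju (plus F) P)

end MV

open MV

/-! Every element of the image lies above `a`, and `(w → a) → a = w ∨ a`, so on the interval
`[a, 1]` the map `z ↦ z → a` is an order-reversing involution. Hence an element `w` between
`u → a` and `v → a` is `(w → a) → a`, with `v ≤ w → a ≤ u ∨ a`. Linearity splits off the case
`u ≤ a`, where `u → a = 1` forces `w = 1`; otherwise `u ∨ a = u` and convexity of `C` applies. -/

namespace MV

variable {L : Type*} [MV L]

theorem zero_add (x : L) : add zero x = x := by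
  rw [add_comm, add_zero]

theorem add_one (x : L) : add x (one : L) = one := add_neg_zero x

theorem one_add (x : L) : add (one : L) x = one := by
  rw [add_comm, add_one]

theorem neg_one : neg (one : L) = zero := neg_neg zero

theorem neg_add_self (x : L) : add (neg x) x = one := by
  have h := luk (one : L) x
  rw [neg_one, zero_add] at h
  rw [h, add_one]

theorem le_iff_exists_add {x y : L} : le x y ↔ ∃ z, y = add x z := by
  constructor
  · intro h
    have hluk := luk x y
    rw [show add (neg x) y = one from h, neg_one, zero_add] at hluk
    exact ⟨_, hluk.trans (add_comm _ _)⟩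
  · rintro ⟨z, rfl⟩
    show add (neg x) (add x z) = one
    rw [← add_assoc, neg_add_self, one_add]

theorem le_add_right (x z : L) : le x (add x z) := le_iff_exists_add.2 ⟨z, rfl⟩

theorem le_trans {x y z : L} (hxy : le x y) (hyz : le y z) : le x z := by
  obtain ⟨u, rfl⟩ := le_iff_exists_add.1 hxy
  obtain ⟨v, rfl⟩ := le_iff_exists_add.1 hyz
  simpa only [add_assoc] using le_add_right x (add u v)

theorem le_antisymm {x y : L} (hxy : le x y) (hyx : le y x) : x = y := by
  have hluk := luk x y
  rw [show add (neg x) y = one from hxy, show add (neg y) x = one from hyx, neg_one,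
    zero_add, zero_add] at hluk
  exact hluk.symm

theorem eq_one_of_one_le {x : L} (h : le one x) : x = one :=
  le_antisymm (add_one (neg x)) h

theorem add_le_add_left {x y : L} (h : le x y) (c : L) : le (add c x) (add c y) := by
  obtain ⟨u, rfl⟩ := le_iff_exists_add.1 h
  simpa only [add_assoc] using le_add_right (add c x) u

theorem neg_le_neg {x y : L} (h : le x y) : le (neg y) (neg x) := by
  obtain ⟨u, rfl⟩ := le_iff_exists_add.1 h
  show add (neg (neg (add x u))) (neg x) = one
  rw [neg_neg, add_comm, ← add_assoc, neg_add_self, one_add]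

theorem imp_le_imp_right {x y : L} (a : L) (h : le x y) : le (imp y a) (imp x a) := by
  unfold imp
  rw [add_comm (neg y), add_comm (neg x)]
  exact add_le_add_left (neg_le_neg h) a

theorem le_imp (z a : L) : le a (imp z a) := by
  simpa only [imp, add_comm] using le_add_right a (neg z)

theorem le_imp_imp (x a : L) : le x (imp (imp x a) a) := by
  unfold imp
  rw [luk x a, add_comm]
  exact le_add_right x _

theorem imp_imp_eq_self_of_le {a x : L} (h : le a x) : imp (imp x a) a = x := by
  unfold imp
  rw [luk x a, show add (neg a) x = one from h, neg_one, zero_add]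

end MV

/-- In a linearly ordered MV-algebra, if `C` is convex then
`{z → a | z ∈ C}` is convex. -/
theorem stmt_15 {L : Type*} [MV L]
    (hlin : ∀ x y : L, le x y ∨ le y x)
    (C : Set L)
    (hC : ∀ x ∈ C, ∀ y ∈ C, ∀ z : L, le x z → le z y → z ∈ C)
    (a : L) :
    ∀ x ∈ {w : L | ∃ z ∈ C, w = imp z a},
      ∀ y ∈ {w : L | ∃ z ∈ C, w = imp z a},
        ∀ z : L, le x z → le z y → z ∈ {w : L | ∃ u ∈ C, w = imp u a} := by
  rintro _ ⟨u, hu, rfl⟩ _ ⟨v, hv, rfl⟩ w huw hwv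
  rcases hlin u a with hua | hau
  · have hw : w = one := eq_one_of_one_le (hua ▸ huw)
    exact ⟨u, hu, hw.trans hua.symm⟩
  · have hvw : le v (imp w a) := MV.le_trans (le_imp_imp v a) (imp_le_imp_right a hwv)
    have hwu : le (imp w a) u := by
      simpa only [imp_imp_eq_self_of_le hau] using imp_le_imp_right a huw
    exact ⟨imp w a, hC v hv u hu _ hvw hwu,
      (imp_imp_eq_self_of_le (MV.le_trans (le_imp u a) huw)).symm⟩
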